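/- Let X be a normed space, Q : X → ℝ, u_g ∈ X, δ > 0, and let (u^n) be a sequence with u⁰ ∈ X such that: (i) Q(u^{n+1}) ≤ Q(u^n) for all n; (ii) there exist 0 < c₁ ≤ c₂ with c₁‖u - u_g‖² ≤ Q(u) - Q(u_g) ≤ c₂‖u - u_g‖² whenever ‖u - u_g‖ ≤ δ; (iii) there exists c₃ > 0 with ‖u^{n+1} - u^n‖ ≤ c₃‖u⁰ - u_g‖ for all n. If ‖u⁰ - u_g‖ ≤ δ₀ where δ₀ < (δ/2)·min{√(c₁/c₂), 1/c₃}, then ‖u^n - u_g‖ ≤ δ for all n ∈ ℕ. -/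

import Mathlib

set_option maxHeartbeats 1000000 in
theorem lyapunov_stability {X : Type*} [NormedAddCommGroup X] [NormedSpace ℝ X]
    (Q : X → ℝ) (u_g : X) (δ δ₀ c₁ c₂ c₃ : ℝ) (u : ℕ → X)
    (hδ : 0 < δ)
    (hQmono : ∀ n, Q (u (n + 1)) ≤ Q (u n))
    (hc₁ : 0 < c₁) (hc₁₂ : c₁ ≤ c₂)
    (hgrowth : ∀ v : X, ‖v - u_g‖ ≤ δ →
      c₁ * ‖v - u_g‖ ^ 2 ≤ Q v - Q u_g ∧ Q v - Q u_g ≤ c₂ * ‖v - u_g‖ ^ 2)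
    (hc₃ : 0 < c₃)
    (hstep : ∀ n, ‖u (n + 1) - u n‖ ≤ c₃ * ‖u 0 - u_g‖)
    (hδ₀ : δ₀ < δ / 2 * min (Real.sqrt (c₁ / c₂)) (1 / c₃))
    (hinit : ‖u 0 - u_g‖ ≤ δ₀) :
    ∀ n : ℕ, ‖u n - u_g‖ ≤ δ := by
  have hδ₀0 : 0 ≤ δ₀ := le_trans (norm_nonneg _) hinit
  have hc₂ : 0 < c₂ := lt_of_lt_of_le hc₁ hc₁₂
  set s := Real.sqrt (c₁ / c₂) with hs
  have hs0 : 0 ≤ s := Real.sqrt_nonneg _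
  have hs2 : s ^ 2 = c₁ / c₂ := Real.sq_sqrt (by positivity)
  have hs1 : s ≤ 1 := by
    nlinarith [div_le_one_of_le₀ hc₁₂ hc₂.le]
  have hmin1 : min s (1 / c₃) ≤ 1 := le_trans (min_le_left _ _) hs1
  have hδ₀s : δ₀ < δ / 2 * s :=
    lt_of_lt_of_le hδ₀ (by
      have := min_le_left s (1 / c₃)
      nlinarith)
  have hδ₀c : δ₀ < δ / 2 * (1 / c₃) :=
    lt_of_lt_of_le hδ₀ (by
      have := min_le_right s (1 / c₃)
      nlinarith)
  have hδ₀δ : δ₀ < δ := lt_of_lt_of_le hδ₀ (by nlinarith)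
  have h0 : ‖u 0 - u_g‖ ≤ δ := le_trans hinit hδ₀δ.le
  have hQ0 : ∀ n, Q (u n) ≤ Q (u 0) := by
    intro n
    induction n with
    | zero => exact le_refl _
    | succ k ih => exact le_trans (hQmono k) ih
  -- key: if ‖u n - u_g‖ ≤ δ then ‖u n - u_g‖ < δ/2
  have key : ∀ n, ‖u n - u_g‖ ≤ δ → ‖u n - u_g‖ < δ / 2 := by
    intro n hn
    have h1 := (hgrowth _ hn).1
    have h2 := (hgrowth _ h0).2
    have h3 := hQ0 n
    have h4 : ‖u 0 - u_g‖ ^ 2 ≤ δ₀ ^ 2 := by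
      nlinarith [norm_nonneg (u 0 - u_g)]
    have hx0 : 0 ≤ ‖u n - u_g‖ := norm_nonneg _
    have hB : c₁ * ‖u n - u_g‖ ^ 2 ≤ c₂ * δ₀ ^ 2 := by nlinarith
    have hA : δ₀ ^ 2 < (δ / 2) ^ 2 * (c₁ / c₂) := by
      calc δ₀ ^ 2 < (δ / 2 * s) ^ 2 := by
            exact pow_lt_pow_left₀ hδ₀s hδ₀0 two_ne_zero
        _ = (δ / 2) ^ 2 * (c₁ / c₂) := by rw [mul_pow, hs2]
      
    have heq : c₂ * ((δ / 2) ^ 2 * (c₁ / c₂)) = c₁ * (δ / 2) ^ 2 := by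
      field_simp
    have hC : c₁ * ‖u n - u_g‖ ^ 2 < c₁ * (δ / 2) ^ 2 := by
      have := mul_lt_mul_of_pos_left hA hc₂
      linarith
    have hD : ‖u n - u_g‖ ^ 2 < (δ / 2) ^ 2 := lt_of_mul_lt_mul_left hC hc₁.le
    nlinarith
  intro n
  induction n with
  | zero => exact h0
  | succ k ih =>
    have hk2 : ‖u k - u_g‖ < δ / 2 := key k ih
    have htri : ‖u (k + 1) - u_g‖ ≤ ‖u (k + 1) - u k‖ + ‖u k - u_g‖ := by
      have := norm_sub_le_norm_sub_add_norm_sub (u (k+1)) (u k) u_g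
      linarith [this]
    have hst : ‖u (k + 1) - u k‖ ≤ c₃ * δ₀ :=
      le_trans (hstep k) (by nlinarith)
    have : c₃ * δ₀ < δ / 2 := by
      have h := mul_lt_mul_of_pos_left hδ₀c hc₃
      have h2 : c₃ * (δ / 2 * (1 / c₃)) = δ / 2 * (c₃ / c₃) := by ring
      rw [div_self hc₃.ne', mul_one] at h2
      linarith
    linarith
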